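/- Let $X$ be a faithful quandle such that for some $x \in X$ the right multiplication $S_x$ fixes an element $y \neq x$. Then the quandle ring $\mathbf{k}[X]$ has a non-trivial idempotent. -/

import Mathlib

/-- A quandle with the paper's (right-multiplication) convention:
`x * y = S_y(x)`, each `S_y` is an automorphism of the quandle fixing `y`. -/
class Quandle' (Q : Type*) extends Mul Q where
  invMul : Q → Q → Q
  rightDist : ∀ x y z : Q, (x * y) * z = (x * z) * (y * z)
  invMul_mul : ∀ x y : Q, invMul (x * y) y = x
  mul_invMul : ∀ x y : Q, (invMul x y) * y = x
  mul_self : ∀ x : Q, x * x = x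

/-!
If `S_x` fixes `y`, right distributivity gives `S_x S_y = S_y S_x`, so
`S_{x * y} = S_y S_x S_y⁻¹ = S_x`, and faithfulness forces `x * y = x`. Thus `x` and `y`
multiply as a left-zero band (`u * v = u` for `u, v ∈ {x, y}`), and for any `a ∉ {0, 1}`
the element `a e_x + (1 - a) e_y` is an idempotent of the quandle ring that is neither `0`
nor a basis element.
-/

namespace Quandle'

def Faithful (Q : Type*) [Mul Q] : Prop :=
  ∀ a b : Q, (∀ z : Q, z * a = z * b) → a = b

variable {Q : Type*} [Quandle' Q]

theorem mul_mul_eq_invMul_mul_mul (x y z : Q) : z * (x * y) = invMul z y * x * y := by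
  simpa only [mul_invMul] using (rightDist (invMul z y) x y).symm

theorem mul_right_comm_of_mul_eq_self {x y : Q} (h : y * x = y) (z : Q) :
    z * y * x = z * x * y := by
  simpa only [h] using rightDist z y x

theorem mul_eq_self_of_mul_eq_self (hQ : Faithful Q) {x y : Q} (h : y * x = y) :
    x * y = x :=
  hQ _ _ fun z => by
    rw [mul_mul_eq_invMul_mul_mul, ← mul_right_comm_of_mul_eq_self h, mul_invMul]

end Quandle'

namespace MonoidAlgebra

variable {k G : Type*} [Semiring k]

theorem isIdempotentElem_single_add_single [Mul G] {x y : G} (hx : x * x = x)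
    (hy : y * y = y) (hxy : x * y = x) (hyx : y * x = y) {a b : k} (hab : a + b = 1) :
    IsIdempotentElem (single x a + single y b) := by
  simp only [IsIdempotentElem, add_mul, mul_add, single_mul_single, hx, hy, hxy, hyx]
  rw [add_add_add_comm, ← single_add, ← single_add, ← mul_add, ← mul_add, hab, mul_one, mul_one]

theorem coeff_single_add_single_left {x y : G} (hxy : x ≠ y) (a b : k) :
    (single x a + single y b).coeff x = a := by
  simp [coeff_add, coeff_single, hxy.symm]

theorem ne_single_one_of_coeff_ne {u : MonoidAlgebra k G} {x : G} (h0 : u.coeff x ≠ 0)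
    (h1 : u.coeff x ≠ 1) (z : G) : u ≠ single z 1 := by
  classical
  rintro rfl
  rw [coeff_single, Finsupp.single_apply] at h0 h1
  split_ifs at h0 h1 <;> contradiction

end MonoidAlgebra

open MonoidAlgebra in
theorem stmt5_general {Q : Type*} [Quandle' Q] (k : Type*) [CommRing k]
    (hk : ∃ a : k, a ≠ 0 ∧ a ≠ 1)
    (faithful : ∀ a b : Q, (∀ z : Q, z * a = z * b) → a = b)
    (x y : Q) (hxy : y ≠ x) (hfix : y * x = y) :
    ∃ u : MonoidAlgebra k Q, u * u = u ∧ u ≠ 0 ∧ ∀ z : Q, u ≠ MonoidAlgebra.single z (1 : k) := by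
  obtain ⟨a, ha0, ha1⟩ := hk
  have hxy_eq : x * y = x := Quandle'.mul_eq_self_of_mul_eq_self faithful hfix
  set u : MonoidAlgebra k Q := single x a + single y (1 - a)
  have hcoeff : u.coeff x = a := coeff_single_add_single_left hxy.symm a (1 - a)
  refine ⟨u, ?_, fun hu => ha0 ?_, ne_single_one_of_coeff_ne (by rwa [hcoeff]) (by rwa [hcoeff])⟩
  · exact isIdempotentElem_single_add_single (Quandle'.mul_self x) (Quandle'.mul_self y)
      hxy_eq hfix (add_sub_cancel a 1)
  · rwa [hu, coeff_zero, Finsupp.zero_apply, eq_comm] at hcoeff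

/-- A faithful quandle in which some `S_x` has a fixed point other than `x` has a
non-trivial idempotent in its quandle ring. -/
theorem stmt5 {Q : Type*} [Quandle' Q] (k : Type*) [CommRing k] [IsDomain k]
    (hk : ∃ a : k, a ≠ 0 ∧ a ≠ 1)
    (faithful : ∀ a b : Q, (∀ z : Q, z * a = z * b) → a = b)
    (x y : Q) (hxy : y ≠ x) (hfix : y * x = y) :
    ∃ u : MonoidAlgebra k Q, u * u = u ∧ u ≠ 0 ∧ ∀ z : Q, u ≠ MonoidAlgebra.single z (1 : k) :=
  stmt5_general k hk faithful x y hxy hfix
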